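/- arXiv:2006.12123 — 5 statements merged into one kernel-verified Lean document; each statement's English description precedes it below -/
import Mathlib

section
/- The set of t ∈ ℝ^{nM} satisfying eᵀ t̄_j = 1 for all j, t ∈ {0,1}^{nM} equals the set of t ∈ ℝ^{nM} satisfying eᵀ t̄_j = 1 for all j, t ≥ 0, and ‖t‖₀ ≤ n, where ‖t‖₀ is the number of nonzero entries of t. -/
/-- The 0/1 assignment constraints are equivalent to nonnegativity together
with the sparsity constraint `‖t‖₀ ≤ n`. -/
theorem stmt_11 {n M : ℕ} :
    {t : Fin n × Fin M → ℝ |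
        (∀ j : Fin n, ∑ i : Fin M, t (j, i) = 1) ∧
        (∀ p : Fin n × Fin M, t p = 0 ∨ t p = 1)} =
    {t : Fin n × Fin M → ℝ |
        (∀ j : Fin n, ∑ i : Fin M, t (j, i) = 1) ∧
        (∀ p : Fin n × Fin M, 0 ≤ t p) ∧
        (Finset.univ.filter fun p : Fin n × Fin M => t p ≠ 0).card ≤ n} := by
  ext t
  simp only [Set.mem_setOf_eq]
  constructor
  · rintro ⟨h1, h2⟩
    have hnn : ∀ p, 0 ≤ t p := fun p => by rcases h2 p with h | h <;> simp [h]
    refine ⟨h1, hnn, ?_⟩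
    have hinj : Set.InjOn (fun p : Fin n × Fin M => p.1)
        ↑(Finset.univ.filter fun p => t p ≠ 0) := by
      rintro ⟨j, i⟩ hp ⟨j', i'⟩ hq (h : j = j')
      subst h
      simp only [Finset.coe_filter, Set.mem_setOf_eq] at hp hq
      by_contra hne
      have hii : i ≠ i' := fun h => hne (by simp [h])
      have hp1 : t (j, i) = 1 := (h2 _).resolve_left hp.2
      have hq1 : t (j, i') = 1 := (h2 _).resolve_left hq.2
      have h2le : (2:ℝ) ≤ ∑ k : Fin M, t (j, k) := by
        calc (2:ℝ) = ∑ k ∈ ({i, i'} : Finset (Fin M)), t (j, k) := by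
              rw [Finset.sum_pair hii, hp1, hq1]; norm_num
          _ ≤ _ := Finset.sum_le_sum_of_subset_of_nonneg (Finset.subset_univ _)
                (fun k _ _ => hnn _)
      rw [h1 j] at h2le; linarith
    calc (Finset.univ.filter fun p : Fin n × Fin M => t p ≠ 0).card
        ≤ (Finset.univ : Finset (Fin n)).card :=
          Finset.card_le_card_of_injOn _ (fun p _ => Finset.mem_univ _) hinj
      _ = n := by simp
  · rintro ⟨h1, h2, h3⟩
    refine ⟨h1, ?_⟩
    have hex : ∀ j : Fin n, ∃ i, t (j, i) ≠ 0 := by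
      intro j
      obtain ⟨i, _, hi⟩ := Finset.exists_ne_zero_of_sum_ne_zero
        (s := Finset.univ) (f := fun i => t (j, i)) (by rw [h1 j]; norm_num)
      exact ⟨i, hi⟩
    choose f hf using hex
    set S := Finset.univ.filter fun p : Fin n × Fin M => t p ≠ 0 with hS
    have hsub : (Finset.univ.image fun j => (j, f j)) ⊆ S := by
      intro p hp
      simp only [Finset.mem_image] at hp
      obtain ⟨j, _, rfl⟩ := hp
      simp [hS, hf j]
    have hinjf : Function.Injective (fun j : Fin n => (j, f j)) := by
      intro a b h
      exact congrArg Prod.fst h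
    have hcard : (Finset.univ.image fun j => (j, f j)).card = n := by
      simp [Finset.card_image_of_injective _ hinjf]
    have hSeq : S = Finset.univ.image fun j => (j, f j) :=
      (Finset.eq_of_subset_of_card_le hsub (by rw [hcard]; exact h3)).symm
    have honly : ∀ j i, t (j, i) ≠ 0 → i = f j := by
      intro j i h
      have hmem : (j, i) ∈ S := by simp [hS, h]
      rw [hSeq] at hmem
      simp only [Finset.mem_image] at hmem
      obtain ⟨j', _, hj⟩ := hmem
      have h1' : j' = j := congrArg Prod.fst hj
      have h2' : f j' = i := congrArg Prod.snd hj
      rw [h1'] at h2'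
      exact h2'.symm
    rintro ⟨j, i⟩
    by_cases hi : i = f j
    · subst hi
      right
      have : ∑ k : Fin M, t (j, k) = t (j, f j) := by
        apply Finset.sum_eq_single
        · intro k _ hk
          by_contra hk0
          exact hk (honly j k hk0)
        · intro hk; exact absurd (Finset.mem_univ _) hk
      rw [h1 j] at this
      exact this.symm
    · left
      by_contra h0
      exact hi (honly j i h0)
end

section
/- Consider minimizing f(t) = tᵀG̃t + 2wᵀt over the product of simplices Δ = {t ∈ ℝ^{nM} : eᵀt̄_j = 1 ∀j, t ≥ 0}, where G̃ is symmetric with zero diagonal blocks. Then there exists a global minimizer t* of f over Δ with ‖t*‖₀ = n, i.e., each block t̄*_j is a standard basis vector of ℝ^M. -/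
/-!
Because the diagonal blocks of `G` vanish, `f` is affine in each block `t̄_j` when the
others are fixed, and an affine function on a simplex is minimised at a vertex. Replacing the
blocks of any `t ∈ Δ` one at a time by suitable vertices therefore never increases `f`, so
every point of `Δ` is dominated by one of the finitely many points all of whose blocks are
vertices; the best of those is a global minimiser.
-/

open Matrix Finset

lemma exists_le_sum_mul_of_sum_eq_one {κ R : Type*} [Fintype κ] [CommRing R] [LinearOrder R]
    [IsStrictOrderedRing R] (c x : κ → R) (hx₀ : ∀ k, 0 ≤ x k) (hx₁ : ∑ k, x k = 1) :
    ∃ i, c i ≤ ∑ k, x k * c k := by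
  obtain ⟨i, -, hi⟩ := exists_min_image univ c (nonempty_of_sum_ne_zero (hx₁ ▸ one_ne_zero))
  refine ⟨i, ?_⟩
  calc c i = ∑ k, x k * c i := by rw [← sum_mul, hx₁, one_mul]
    _ ≤ ∑ k, x k * c k :=
      sum_le_sum fun k hk => mul_le_mul_of_nonneg_left (hi k hk) (hx₀ k)

section BlockQuadratic

variable {ι κ R : Type*}

def quadraticObjective [Fintype ι] [Fintype κ] [CommRing R] (G : Matrix (ι × κ) (ι × κ) R)
    (w t : ι × κ → R) : R :=
  t ⬝ᵥ G *ᵥ t + 2 * (w ⬝ᵥ t)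

def blockSimplex [Fintype κ] [CommRing R] [LE R] : Set (ι × κ → R) :=
  {t | (∀ j, ∑ i, t (j, i) = 1) ∧ ∀ p, 0 ≤ t p}

def blockSingle [DecidableEq ι] [Zero R] (j : ι) (x : κ → R) : ι × κ → R :=
  fun p => if p.1 = j then x p.2 else 0

def setBlock [DecidableEq ι] (t : ι × κ → R) (j : ι) (x : κ → R) : ι × κ → R :=
  fun p => if p.1 = j then x p.2 else t p

def blockVertex [DecidableEq κ] [Zero R] [One R] (σ : ι → κ) : ι × κ → R :=
  fun p => if p.2 = σ p.1 then 1 else 0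

lemma dotProduct_blockSingle [Fintype ι] [Fintype κ] [DecidableEq ι] [CommRing R]
    (z : ι × κ → R) (j : ι) (x : κ → R) :
    z ⬝ᵥ blockSingle j x = ∑ k, z (j, k) * x k := by
  rw [dotProduct, Fintype.sum_prod_type, sum_eq_single j (fun b _ hb => by simp [blockSingle, hb])
    (by simp)]
  simp [blockSingle]

lemma blockSingle_dotProduct_mulVec_blockSingle [Fintype ι] [Fintype κ] [DecidableEq ι]
    [CommRing R] {G : Matrix (ι × κ) (ι × κ) R}
    (hdiag : ∀ j i l, G (j, i) (j, l) = 0) (j : ι) (x y : κ → R) :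
    blockSingle j x ⬝ᵥ G *ᵥ blockSingle j y = 0 := by
  rw [dotProduct_comm, dotProduct_blockSingle]
  refine sum_eq_zero fun k _ => ?_
  simp [mulVec, dotProduct_blockSingle, hdiag]

lemma setBlock_eq_add [DecidableEq ι] [CommRing R] (t : ι × κ → R) (j : ι) (x : κ → R) :
    setBlock t j x = t + blockSingle j (x - fun k => t (j, k)) := by
  funext ⟨a, k⟩
  by_cases h : a = j
  · subst h; simp [setBlock, blockSingle]
  · simp [setBlock, blockSingle, h]

lemma quadraticObjective_add_blockSingle [Fintype ι] [Fintype κ] [DecidableEq ι]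
    [CommRing R] {G : Matrix (ι × κ) (ι × κ) R} (hsym : G.IsSymm)
    (hdiag : ∀ j i l, G (j, i) (j, l) = 0) (w t : ι × κ → R) (j : ι) (d : κ → R) :
    quadraticObjective G w (t + blockSingle j d) =
      quadraticObjective G w t + ∑ k, 2 * ((G *ᵥ t) (j, k) + w (j, k)) * d k := by
  have hcross : t ⬝ᵥ G *ᵥ blockSingle j d = ∑ k, (G *ᵥ t) (j, k) * d k := by
    rw [dotProduct_mulVec, ← hsym, vecMul_transpose, dotProduct_blockSingle, hsym]
  have hcross' : blockSingle j d ⬝ᵥ G *ᵥ t = ∑ k, (G *ᵥ t) (j, k) * d k := by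
    rw [dotProduct_comm, dotProduct_blockSingle]
  simp only [quadraticObjective, mulVec_add, dotProduct_add, add_dotProduct, hcross, hcross',
    blockSingle_dotProduct_mulVec_blockSingle hdiag, dotProduct_blockSingle, mul_add, add_mul,
    sum_add_distrib, mul_assoc, ← mul_sum]
  ring

lemma exists_quadraticObjective_setBlock_le [Fintype ι] [Fintype κ] [DecidableEq ι]
    [DecidableEq κ] [CommRing R] [LinearOrder R] [IsStrictOrderedRing R]
    {G : Matrix (ι × κ) (ι × κ) R} (hsym : G.IsSymm) (hdiag : ∀ j i l, G (j, i) (j, l) = 0)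
    (w t : ι × κ → R) (j : ι) (hsum : ∑ k, t (j, k) = 1) (hnonneg : ∀ k, 0 ≤ t (j, k)) :
    ∃ i, quadraticObjective G w (setBlock t j (Pi.single i 1)) ≤ quadraticObjective G w t := by
  set c : κ → R := fun k => 2 * ((G *ᵥ t) (j, k) + w (j, k))
  obtain ⟨i, hi⟩ := exists_le_sum_mul_of_sum_eq_one c (fun k => t (j, k)) hnonneg hsum
  refine ⟨i, ?_⟩
  have hchange : ∑ k, c k * (Pi.single i 1 - fun k => t (j, k) : κ → R) k
      = c i - ∑ k, t (j, k) * c k := by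
    simp only [Pi.sub_apply, mul_comm (c _), sub_mul, sum_sub_distrib]
    simp [Pi.single_apply]
  rw [setBlock_eq_add, quadraticObjective_add_blockSingle hsym hdiag, ← sub_nonpos,
    add_sub_cancel_left]
  exact hchange.trans_le (sub_nonpos.2 hi)

lemma exists_quadraticObjective_blockVertex_le [Fintype ι] [Fintype κ] [DecidableEq ι]
    [DecidableEq κ] [Nonempty κ] [CommRing R] [LinearOrder R] [IsStrictOrderedRing R]
    {G : Matrix (ι × κ) (ι × κ) R} (hsym : G.IsSymm) (hdiag : ∀ j i l, G (j, i) (j, l) = 0)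
    (w : ι × κ → R) {t : ι × κ → R} (ht : t ∈ blockSimplex) :
    ∃ σ, quadraticObjective G w (blockVertex σ) ≤ quadraticObjective G w t := by
  suffices h : ∀ S : Finset ι, ∃ σ, quadraticObjective G w
      (fun p => if p.1 ∈ S then blockVertex σ p else t p) ≤ quadraticObjective G w t by
    simpa using h univ
  intro S
  induction S using Finset.induction_on with
  | empty => exact ⟨Classical.arbitrary _, by simp⟩
  | @insert j S hjS ih =>
    obtain ⟨σ, hσ⟩ := ih
    set u : ι × κ → R := fun p => if p.1 ∈ S then blockVertex σ p else t p
    have hu : ∀ k, u (j, k) = t (j, k) := fun k => by simp [u, hjS]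
    obtain ⟨i, hi⟩ := exists_quadraticObjective_setBlock_le hsym hdiag w u j
      (by simpa only [hu] using ht.1 j) (fun k => hu k ▸ ht.2 _)
    have hupdate : (fun p => if p.1 ∈ insert j S then blockVertex (Function.update σ j i) p
        else t p) = setBlock u j (Pi.single i 1) := by
      funext ⟨a, k⟩
      by_cases h : a = j
      · subst h; simp [setBlock, blockVertex, Pi.single_apply]
      · simp [u, setBlock, blockVertex, h]
    exact ⟨Function.update σ j i, hupdate ▸ hi.trans hσ⟩

lemma blockVertex_mem_blockSimplex [Fintype κ] [DecidableEq κ] [CommRing R]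
    [LinearOrder R] [IsStrictOrderedRing R] (σ : ι → κ) :
    (blockVertex σ : ι × κ → R) ∈ blockSimplex :=
  ⟨fun j => by simp [blockVertex], fun p => by unfold blockVertex; split_ifs <;> norm_num⟩

end BlockQuadratic

/-- The quadratic `f(t) = tᵀG̃t + 2wᵀt`, with `G̃` symmetric and zero diagonal
blocks, has a global minimizer over the product of simplices all of whose
blocks are standard basis vectors (so `‖t*‖₀ = n`). -/
theorem stmt_14 {n M : ℕ} (hM : 0 < M)
    (G : Matrix (Fin n × Fin M) (Fin n × Fin M) ℝ)
    (hsym : G.IsSymm)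
    (hdiag : ∀ (j : Fin n) (i l : Fin M), G (j, i) (j, l) = 0)
    (w : Fin n × Fin M → ℝ)
    (f : (Fin n × Fin M → ℝ) → ℝ)
    (hf : ∀ t, f t = t ⬝ᵥ G.mulVec t + 2 * (w ⬝ᵥ t))
    (Δ : Set (Fin n × Fin M → ℝ))
    (hΔ : Δ = {t | (∀ j : Fin n, ∑ i : Fin M, t (j, i) = 1) ∧ ∀ p, 0 ≤ t p}) :
    ∃ ts ∈ Δ, (∀ s ∈ Δ, f ts ≤ f s) ∧
      ∃ σ : Fin n → Fin M, ∀ p : Fin n × Fin M, ts p = if p.2 = σ p.1 then 1 else 0 := by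
  obtain rfl : f = quadraticObjective G w := funext hf
  subst hΔ
  have : Nonempty (Fin M) := ⟨⟨0, hM⟩⟩
  obtain ⟨σ, hσ⟩ := Finite.exists_min fun σ : Fin n → Fin M =>
    quadraticObjective G w (blockVertex σ)
  refine ⟨blockVertex σ, blockVertex_mem_blockSimplex σ, fun s hs => ?_, σ, fun _ => rfl⟩
  obtain ⟨τ, hτ⟩ := exists_quadraticObjective_blockVertex_le hsym hdiag w hs
  exact (hσ τ).trans hτ
end

section
/- Consider minimizing f(t) = tᵀG̃t + 2wᵀt over Δ = {t ∈ ℝ^{nM} : eᵀt̄_j = 1 ∀j, t ≥ 0}, with G̃ symmetric with zero diagonal blocks. If t* is the unique global minimizer of f over Δ ∩ {‖t‖₀ ≤ n}, then t* is the unique global minimizer of f over Δ. -/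
open Matrix

lemma keylin_aux {n M : ℕ}
    (G : Matrix (Fin n × Fin M) (Fin n × Fin M) ℝ)
    (hsym : G.IsSymm)
    (hdiag : ∀ (j : Fin n) (i l : Fin M), G (j, i) (j, l) = 0)
    (w : Fin n × Fin M → ℝ) (s t : Fin n × Fin M → ℝ) (j : Fin n)
    (hagree : ∀ p : Fin n × Fin M, p.1 ≠ j → t p = s p) :
    t ⬝ᵥ G.mulVec t + 2 * (w ⬝ᵥ t)
      = s ⬝ᵥ G.mulVec s + 2 * (w ⬝ᵥ s)
        + 2 * ∑ i, (G.mulVec s (j, i) + w (j, i)) * (t (j, i) - s (j, i)) := by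
  set d : Fin n × Fin M → ℝ := t - s with hdef
  have hd : ∀ p : Fin n × Fin M, p.1 ≠ j → d p = 0 := by
    intro p hp
    simp [hdef, hagree p hp]
  have hts : t = s + d := by funext p; simp [hdef]
  have hdd : d ⬝ᵥ G.mulVec d = 0 := by
    simp only [dotProduct, mulVec]
    apply Finset.sum_eq_zero
    intro p _
    by_cases hp : p.1 = j
    · have : (∑ q, G p q * d q) = 0 := by
        apply Finset.sum_eq_zero
        intro q _
        by_cases hq : q.1 = j
        · obtain ⟨p1, p2⟩ := p
          obtain ⟨q1, q2⟩ := q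
          simp only at hp hq
          subst hp; subst hq
          rw [hdiag]; ring
        · rw [hd q hq]; ring
      rw [this]; ring
    · rw [hd p hp]; ring
  have hsd : s ⬝ᵥ G.mulVec d = d ⬝ᵥ G.mulVec s := by
    rw [dotProduct_mulVec, ← Matrix.mulVec_transpose, hsym, dotProduct_comm]
  have hsum : ∀ v : Fin n × Fin M → ℝ, d ⬝ᵥ v = ∑ i, d (j, i) * v (j, i) := by
    intro v
    rw [dotProduct, Fintype.sum_prod_type]
    exact Finset.sum_eq_single j
      (fun a _ ha => Finset.sum_eq_zero fun b _ => by rw [hd (a, b) ha]; ring)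
      (fun h => absurd (Finset.mem_univ j) h)
  have h1 : t ⬝ᵥ G.mulVec t = s ⬝ᵥ G.mulVec s + 2 * (d ⬝ᵥ G.mulVec s) := by
    rw [hts, mulVec_add, add_dotProduct, dotProduct_add, dotProduct_add, hdd, hsd]
    ring
  have h2 : w ⬝ᵥ t = w ⬝ᵥ s + d ⬝ᵥ w := by
    rw [hts, dotProduct_add, dotProduct_comm w d]
  have h3 : ∑ i, (G.mulVec s (j, i) + w (j, i)) * (t (j, i) - s (j, i))
      = d ⬝ᵥ G.mulVec s + d ⬝ᵥ w := by
    rw [hsum (G.mulVec s), hsum w, ← Finset.sum_add_distrib]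
    apply Finset.sum_congr rfl
    intro i _
    have hdi : d (j, i) = t (j, i) - s (j, i) := by simp [hdef]
    rw [hdi]; ring
  rw [h1, h2, h3]; ring

/-- If `t*` is the unique global minimizer of `f` over `Δ ∩ {‖t‖₀ ≤ n}`, then
`t*` is the unique global minimizer of `f` over the product of simplices `Δ`. -/
theorem stmt_15 {n M : ℕ}
    (G : Matrix (Fin n × Fin M) (Fin n × Fin M) ℝ)
    (hsym : G.IsSymm)
    (hdiag : ∀ (j : Fin n) (i l : Fin M), G (j, i) (j, l) = 0)
    (w : Fin n × Fin M → ℝ)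
    (f : (Fin n × Fin M → ℝ) → ℝ)
    (hf : ∀ t, f t = t ⬝ᵥ G.mulVec t + 2 * (w ⬝ᵥ t))
    (Δ : Set (Fin n × Fin M → ℝ))
    (hΔ : Δ = {t | (∀ j : Fin n, ∑ i : Fin M, t (j, i) = 1) ∧ ∀ p, 0 ≤ t p})
    (ts : Fin n × Fin M → ℝ)
    (hts : ts ∈ Δ ∧ (Finset.univ.filter fun p : Fin n × Fin M => ts p ≠ 0).card ≤ n)
    (huniq : ∀ s, s ∈ Δ →
      (Finset.univ.filter fun p : Fin n × Fin M => s p ≠ 0).card ≤ n →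
      s ≠ ts → f ts < f s) :
    ∀ s ∈ Δ, s ≠ ts → f ts < f s := by
  suffices H : ∀ N : ℕ, ∀ s ∈ Δ,
      (Finset.univ.filter fun p : Fin n × Fin M => s p ≠ 0).card ≤ N →
      s ≠ ts → f ts < f s by
    intro s hs hne; exact H _ s hs le_rfl hne
  intro N
  induction N with
  | zero =>
    intro s hs hc hne
    exact huniq s hs (le_trans hc (Nat.zero_le n)) hne
  | succ N ih =>
    intro s hsΔ hc hne
    by_cases hsp : (Finset.univ.filter fun p : Fin n × Fin M => s p ≠ 0).card ≤ n
    · exact huniq s hsΔ hsp hne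
    have hs := hsΔ
    rw [hΔ] at hs
    obtain ⟨hsum1, hpos⟩ := hs
    -- some block has two nonzero entries
    have hjex : ∃ j : Fin n, ∃ i₁ i₂ : Fin M, i₁ ≠ i₂ ∧ s (j, i₁) ≠ 0 ∧ s (j, i₂) ≠ 0 := by
      by_contra hno
      push_neg at hno
      have hex : ∀ j : Fin n, ∃ i, s (j, i) ≠ 0 := by
        intro j
        by_contra h
        push_neg at h
        have h1 := hsum1 j
        rw [Finset.sum_eq_zero (fun i _ => h i)] at h1
        norm_num at h1
      choose g hg using hex
      apply hsp
      have hsub : (Finset.univ.filter fun p : Fin n × Fin M => s p ≠ 0)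
          ⊆ Finset.univ.image (fun j : Fin n => (j, g j)) := by
        intro p hp
        simp only [Finset.mem_filter, Finset.mem_univ, true_and] at hp
        simp only [Finset.mem_image]
        refine ⟨p.1, Finset.mem_univ _, ?_⟩
        have h2 : p.2 = g p.1 := by
          by_contra hne2
          exact hp (hno p.1 (g p.1) p.2 (Ne.symm hne2) (hg p.1))
        exact Prod.ext rfl h2.symm
      calc (Finset.univ.filter fun p : Fin n × Fin M => s p ≠ 0).card
          ≤ (Finset.univ.image (fun j : Fin n => (j, g j))).card := Finset.card_le_card hsub
        _ ≤ (Finset.univ : Finset (Fin n)).card := Finset.card_image_le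
        _ = n := by simp
    obtain ⟨j, i₁', i₂', hne12, h1ne, h2ne⟩ := hjex
    set c : Fin M → ℝ := fun i => G.mulVec s (j, i) + w (j, i) with hcdef
    set T : Finset (Fin M) := Finset.univ.filter (fun i => s (j, i) ≠ 0) with hTdef
    have hmemT : ∀ i : Fin M, i ∈ T ↔ s (j, i) ≠ 0 := by
      intro i; simp [hTdef]
    have hi₁T : i₁' ∈ T := (hmemT i₁').mpr h1ne
    have hi₂T : i₂' ∈ T := (hmemT i₂').mpr h2ne
    obtain ⟨i₀, hi₀T, hi₀min⟩ := Finset.exists_min_image T c ⟨i₁', hi₁T⟩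
    have hex1 : ∃ i₁ ∈ T, i₁ ≠ i₀ := by
      by_cases h : i₁' = i₀
      · exact ⟨i₂', hi₂T, fun he => hne12 (h.trans he.symm)⟩
      · exact ⟨i₁', hi₁T, h⟩
    obtain ⟨i₁, hi₁T', hi₁ne⟩ := hex1
    set upd : Fin M → (Fin n × Fin M → ℝ) :=
      fun i' p => if p.1 = j then (if p.2 = i' then 1 else 0) else s p with hupdef
    have hupdapp : ∀ i' i : Fin M, upd i' (j, i) = if i = i' then 1 else 0 := by
      intro i' i; simp [hupdef]
    have hupdoff : ∀ i' : Fin M, ∀ p : Fin n × Fin M, p.1 ≠ j → upd i' p = s p := by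
      intro i' p hp; simp [hupdef, hp]
    have hupdΔ : ∀ i' : Fin M, upd i' ∈ Δ := by
      intro i'
      rw [hΔ]
      constructor
      · intro k
        by_cases hk : k = j
        · subst hk
          simp only [hupdapp]
          simp
        · have : ∀ i : Fin M, upd i' (k, i) = s (k, i) := fun i => hupdoff i' (k, i) hk
          simp only [this]
          exact hsum1 k
      · intro p
        by_cases hp : p.1 = j
        · simp only [hupdef, hp, if_true]
          split <;> norm_num
        · rw [hupdoff i' p hp]; exact hpos p
    have hupdval : ∀ i' : Fin M,
        f (upd i') = f s + 2 * (c i' - ∑ i, c i * s (j, i)) := by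
      intro i'
      rw [hf, hf, keylin_aux G hsym hdiag w s (upd i') j (fun p hp => hupdoff i' p hp)]
      have hsum2 : ∑ i, (G.mulVec s (j, i) + w (j, i)) * (upd i' (j, i) - s (j, i))
          = c i' - ∑ i, c i * s (j, i) := by
        have hstep : ∀ i : Fin M,
            (G.mulVec s (j, i) + w (j, i)) * (upd i' (j, i) - s (j, i))
              = (if i = i' then c i else 0) - c i * s (j, i) := by
          intro i
          rw [hupdapp]
          by_cases h : i = i' <;> simp [h, hcdef] <;> ring
        rw [Finset.sum_congr rfl (fun i _ => hstep i), Finset.sum_sub_distrib,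
          Finset.sum_ite_eq' Finset.univ i' c]
        simp
      rw [hsum2]
    -- support of updates
    have hsupp : ∀ i' i'' : Fin M, i' ∈ T → i'' ∈ T → i'' ≠ i' →
        (Finset.univ.filter fun p : Fin n × Fin M => upd i' p ≠ 0).card ≤ N := by
      intro i' i'' hT' hT'' hne'
      have hsub : (Finset.univ.filter fun p : Fin n × Fin M => upd i' p ≠ 0)
          ⊆ (Finset.univ.filter fun p : Fin n × Fin M => s p ≠ 0).erase (j, i'') := by
        intro p hp
        simp only [Finset.mem_filter, Finset.mem_univ, true_and] at hp
        rw [Finset.mem_erase]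
        constructor
        · intro hpe
          apply hp
          rw [hpe, hupdapp]
          simp [hne']
        · simp only [Finset.mem_filter, Finset.mem_univ, true_and]
          by_cases hpj : p.1 = j
          · have hp2 : p.2 = i' := by
              by_contra hpp
              apply hp
              simp [hupdef, hpj, hpp]
            have hpeq : p = (j, i') := Prod.ext hpj hp2
            rw [hpeq]
            exact (hmemT i').mp hT'
          · rw [← hupdoff i' p hpj]; exact hp
      have hm : (j, i'') ∈ (Finset.univ.filter fun p : Fin n × Fin M => s p ≠ 0) := by
        simp only [Finset.mem_filter, Finset.mem_univ, true_and]
        exact (hmemT i'').mp hT''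
      have h4 := Finset.card_le_card hsub
      rw [Finset.card_erase_of_mem hm] at h4
      omega
    -- value comparison
    have hTzero : ∀ i : Fin M, i ∉ T → s (j, i) = 0 := by
      intro i hi
      by_contra h
      exact hi ((hmemT i).mpr h)
    have hrestrict : ∀ v : Fin M → ℝ, ∑ i, v i * s (j, i) = ∑ i ∈ T, v i * s (j, i) := by
      intro v
      refine (Finset.sum_subset (Finset.subset_univ T) ?_).symm
      intro i _ hi
      rw [hTzero i hi]; ring
    have hTsum : ∑ i ∈ T, s (j, i) = 1 := by
      rw [← hsum1 j]
      exact Finset.sum_subset (Finset.subset_univ T) (fun i _ hi => hTzero i hi)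
    have hgec : ∑ i, c i * s (j, i) ≥ c i₀ := by
      rw [hrestrict c]
      calc ∑ i ∈ T, c i * s (j, i) ≥ ∑ i ∈ T, c i₀ * s (j, i) :=
            Finset.sum_le_sum fun i hi =>
              mul_le_mul_of_nonneg_right (hi₀min i hi) (hpos (j, i))
        _ = c i₀ * ∑ i ∈ T, s (j, i) := by rw [Finset.mul_sum]
        _ = c i₀ := by rw [hTsum]; ring
    have hle : f (upd i₀) ≤ f s := by
      rw [hupdval i₀]
      linarith
    by_cases hup : upd i₀ = ts
    · by_cases hstrict : f (upd i₀) < f s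
      · rw [hup] at hstrict; exact hstrict
      · have heq : f (upd i₀) = f s := le_antisymm hle (not_lt.mp hstrict)
        have hceq : ∑ i, c i * s (j, i) = c i₀ := by
          have := hupdval i₀
          rw [heq] at this
          linarith
        have hsum0 : ∑ i ∈ T, (c i - c i₀) * s (j, i) = 0 := by
          have e1 : ∑ i ∈ T, (c i - c i₀) * s (j, i)
              = ∑ i ∈ T, c i * s (j, i) - c i₀ * ∑ i ∈ T, s (j, i) := by
            rw [Finset.mul_sum, ← Finset.sum_sub_distrib]
            exact Finset.sum_congr rfl fun i _ => by ring
          rw [e1, hTsum, ← hrestrict c, hceq]; ring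
        have hci₁ : c i₁ = c i₀ := by
          have hterm := (Finset.sum_eq_zero_iff_of_nonneg
            (fun i hi => mul_nonneg (by linarith [hi₀min i hi]) (hpos (j, i)))).mp
            hsum0 i₁ hi₁T'
          rcases mul_eq_zero.mp hterm with h | h
          · linarith
          · exact absurd h ((hmemT i₁).mp hi₁T')
        have hval1 : f (upd i₁) = f s := by
          rw [hupdval i₁, hci₁, hceq]; ring
        have hne1 : upd i₁ ≠ ts := by
          intro h
          have h5 : upd i₁ (j, i₀) = upd i₀ (j, i₀) := by rw [h, hup]
          rw [hupdapp, hupdapp] at h5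
          simp [Ne.symm hi₁ne] at h5
        have h6 := ih (upd i₁) (hupdΔ i₁) (hsupp i₁ i₀ hi₁T' hi₀T (Ne.symm hi₁ne)) hne1
        rw [hval1] at h6
        exact h6
    · have h7 := ih (upd i₀) (hupdΔ i₀) (hsupp i₀ i₁ hi₀T hi₁T' hi₁ne) hup
      linarith
end

section
/- Let Δ be the product of n standard simplices in ℝ^M, let f(t) = tᵀG̃t + 2wᵀt with G̃ symmetric with zero diagonal blocks, and let t⁰ ∈ Δ be a global minimizer of f over Δ. For each j in turn, replace the j-th block of the current point by a standard basis vector e_{s_j}, where s_j minimizes the j-th block of the gradient ∇_{t̄_j} f at the current point. Then the final point tⁿ satisfies ‖tⁿ‖₀ = n and f(tⁿ) ≤ f(t⁰). -/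
open Matrix

private lemma stmt_16_step {n M : ℕ}
    (G : Matrix (Fin n × Fin M) (Fin n × Fin M) ℝ)
    (hsym : G.IsSymm)
    (hdiag : ∀ (j : Fin n) (i l : Fin M), G (j, i) (j, l) = 0)
    (w : Fin n × Fin M → ℝ) (j : Fin n) (s : Fin M)
    (t t' : Fin n × Fin M → ℝ)
    (ht1 : ∑ i : Fin M, t (j, i) = 1) (ht0 : ∀ p, 0 ≤ t p)
    (hmin : ∀ i, G.mulVec t (j, s) + w (j, s) ≤ G.mulVec t (j, i) + w (j, i))
    (ht' : ∀ p : Fin n × Fin M, t' p = if p.1 = j then (if p.2 = s then 1 else 0) else t p) :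
    t' ⬝ᵥ G.mulVec t' + 2 * (w ⬝ᵥ t') ≤ t ⬝ᵥ G.mulVec t + 2 * (w ⬝ᵥ t) := by
  set d : Fin n × Fin M → ℝ := fun p => t' p - t p with hd
  have hdz : ∀ p : Fin n × Fin M, p.1 ≠ j → d p = 0 := by
    intro p hp; simp [hd, ht' p, hp]
  have hsymm : ∀ u v : Fin n × Fin M → ℝ, u ⬝ᵥ G.mulVec v = v ⬝ᵥ G.mulVec u := by
    intro u v
    rw [Matrix.dotProduct_mulVec, ← Matrix.mulVec_transpose, hsym.eq, dotProduct_comm]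
  have hdGd : d ⬝ᵥ G.mulVec d = 0 := by
    simp only [dotProduct, mulVec]
    apply Finset.sum_eq_zero
    intro p _
    rcases eq_or_ne p.1 j with h | h
    · have : (∑ q, G p q * d q) = 0 := by
        apply Finset.sum_eq_zero
        intro q _
        rcases eq_or_ne q.1 j with h' | h'
        · have hGpq : G p q = 0 := by
            rw [← Prod.mk.eta (p := p), ← Prod.mk.eta (p := q), h, h']
            exact hdiag j p.2 q.2
          simp [hGpq]
        · simp [hdz q h']
      simp [dotProduct, this]
    · simp [hdz p h]
  have ht'd : t' = fun p => t p + d p := by funext p; simp [hd]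
  have expand : t' ⬝ᵥ G.mulVec t' + 2 * (w ⬝ᵥ t')
      = (t ⬝ᵥ G.mulVec t + 2 * (w ⬝ᵥ t)) + 2 * (d ⬝ᵥ G.mulVec t + w ⬝ᵥ d)
        + d ⬝ᵥ G.mulVec d := by
    have h1 : t' ⬝ᵥ G.mulVec t' = t ⬝ᵥ G.mulVec t + t ⬝ᵥ G.mulVec d
        + (d ⬝ᵥ G.mulVec t + d ⬝ᵥ G.mulVec d) := by
      rw [ht'd]
      show (t + d) ⬝ᵥ G.mulVec (t + d) = _
      rw [Matrix.mulVec_add, dotProduct_add, add_dotProduct, add_dotProduct]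
      ring
    have h2 : w ⬝ᵥ t' = w ⬝ᵥ t + w ⬝ᵥ d := by
      rw [ht'd]; exact dotProduct_add w t d
    rw [h1, h2, hsymm t d]; ring
  set c : Fin M → ℝ := fun i => G.mulVec t (j, i) + w (j, i) with hc
  have hsum : d ⬝ᵥ G.mulVec t + w ⬝ᵥ d = ∑ i : Fin M, d (j, i) * c i := by
    have : d ⬝ᵥ G.mulVec t + w ⬝ᵥ d = ∑ p : Fin n × Fin M, d p * (G.mulVec t p + w p) := by
      simp only [dotProduct, mul_add, Finset.sum_add_distrib]
      congr 1
      exact Finset.sum_congr rfl fun p _ => mul_comm (w p) (d p)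
    rw [this, Fintype.sum_prod_type]
    rw [Finset.sum_eq_single j]
    · intro b _ hb
      apply Finset.sum_eq_zero
      intro i _
      simp [hdz (b, i) hb]
    · simp
  have hkey : ∑ i : Fin M, d (j, i) * c i ≤ 0 := by
    have hdji : ∀ i : Fin M, d (j, i) = (if i = s then 1 else 0) - t (j, i) := by
      intro i; simp [hd, ht' (j, i)]
    have h1 : ∑ i : Fin M, d (j, i) * c i
        = c s - ∑ i : Fin M, t (j, i) * c i := by
      simp only [hdji, sub_mul]
      rw [Finset.sum_sub_distrib]
      congr 1
      simp [ite_mul]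
    rw [h1, sub_nonpos]
    calc c s = (∑ i : Fin M, t (j, i)) * c s := by rw [ht1, one_mul]
      _ = ∑ i : Fin M, t (j, i) * c s := by rw [Finset.sum_mul]
      _ ≤ ∑ i : Fin M, t (j, i) * c i := by
          apply Finset.sum_le_sum
          intro i _
          exact mul_le_mul_of_nonneg_left (hmin i) (ht0 (j, i))
  rw [expand, hdGd, add_zero]
  nlinarith [hkey, hsum]


/-- Sequential rounding: starting from a global minimizer `t⁰` of
`f(t) = tᵀG̃t + 2wᵀt` over the product of simplices, replacing block `j` by the
basis vector indexed by a minimizer of the `j`-th block of the gradient, for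
`j = 1, ..., n` in turn, produces a point `tⁿ` all of whose blocks are standard
basis vectors (so `‖tⁿ‖₀ = n`) with `f(tⁿ) ≤ f(t⁰)`. -/
theorem stmt_16 {n M : ℕ} (hM : 0 < M)
    (G : Matrix (Fin n × Fin M) (Fin n × Fin M) ℝ)
    (hsym : G.IsSymm)
    (hdiag : ∀ (j : Fin n) (i l : Fin M), G (j, i) (j, l) = 0)
    (w : Fin n × Fin M → ℝ)
    (f : (Fin n × Fin M → ℝ) → ℝ)
    (hf : ∀ t, f t = t ⬝ᵥ G.mulVec t + 2 * (w ⬝ᵥ t))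
    (Δ : Set (Fin n × Fin M → ℝ))
    (hΔ : Δ = {t | (∀ j : Fin n, ∑ i : Fin M, t (j, i) = 1) ∧ ∀ p, 0 ≤ t p})
    (T : Fin (n + 1) → (Fin n × Fin M → ℝ))
    (hT0 : T 0 ∈ Δ) (hT0min : ∀ s ∈ Δ, f (T 0) ≤ f s)
    (σ : Fin n → Fin M)
    -- at step `j`, `σ j` minimizes the `j`-th block of the gradient `2(G̃t + w)`
    (hσ : ∀ j : Fin n, ∀ i : Fin M,
      (G.mulVec (T j.castSucc)) (j, σ j) + w (j, σ j) ≤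
        (G.mulVec (T j.castSucc)) (j, i) + w (j, i))
    -- the update replaces block `j` by the basis vector `e_{σ j}`
    (hstep : ∀ j : Fin n, ∀ p : Fin n × Fin M,
      T j.succ p = if p.1 = j then (if p.2 = σ j then 1 else 0) else T j.castSucc p) :
    (∀ j : Fin n, ∀ i : Fin M,
        T (Fin.last n) (j, i) = if i = σ j then 1 else 0) ∧
      f (T (Fin.last n)) ≤ f (T 0) := by
  subst hΔ
  have mem : ∀ k : Fin (n + 1),
      T k ∈ {t : Fin n × Fin M → ℝ |
        (∀ j : Fin n, ∑ i : Fin M, t (j, i) = 1) ∧ ∀ p, 0 ≤ t p} := by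
    intro k
    induction k using Fin.induction with
    | zero => exact hT0
    | succ j ih =>
      obtain ⟨ih1, ih2⟩ := ih
      constructor
      · intro j'
        rcases eq_or_ne j' j with h | h
        · subst h
          simp only [hstep j']
          simp
        · simp only [hstep j]
          simpa [h] using ih1 j'
      · intro p
        rw [hstep j p]
        split
        · split <;> norm_num
        · exact ih2 p
  have dec : ∀ k : Fin (n + 1), f (T k) ≤ f (T 0) := by
    intro k
    induction k using Fin.induction with
    | zero => exact le_refl _
    | succ j ih =>
      refine le_trans ?_ ih
      rw [hf, hf]
      exact stmt_16_step G hsym hdiag w j (σ j) (T j.castSucc) (T j.succ)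
        ((mem j.castSucc).1 j) (mem j.castSucc).2 (hσ j) (hstep j)
  have pres : ∀ (k : Fin (n + 1)) (j : Fin n), (j : ℕ) < (k : ℕ) →
      ∀ i : Fin M, T k (j, i) = if i = σ j then 1 else 0 := by
    intro k
    induction k using Fin.induction with
    | zero => intro j h i; exact absurd h (Nat.not_lt_zero _)
    | succ j' ih =>
      intro j h i
      rw [hstep j' (j, i)]
      rcases eq_or_ne j j' with rfl | hne
      · simp
      · have hlt : (j : ℕ) < (j'.castSucc : ℕ) := by
          have h1 : (j : ℕ) < (j' : ℕ) + 1 := by simpa using h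
          have h2 : (j : ℕ) ≠ (j' : ℕ) := Fin.val_ne_of_ne hne
          simpa using lt_of_le_of_ne (Nat.lt_succ_iff.mp h1) h2
        simp only [hne, if_false]
        exact ih j hlt i
  refine ⟨fun j i => pres (Fin.last n) j (by simpa using j.isLt) i, dec (Fin.last n)⟩
end

section
/- Let H ∈ ℂ^{m×n}, v ∈ ℂ^m, Q = H†H, and Q̄ = Q − (1/2)Diag(diag(Q)). Let x* ∈ ℂⁿ with entries exp(iθ*_j), θ*_j ∈ A = {2(k−1)π/M : k = 1..M}, and let x ∈ ℂⁿ be any other vector with entries in exp(iA), x ≠ x*. If √2 · λ_min(Q̄) · sin(π/M) > ‖H†v‖_∞, then −2⟨x* − x, Q̄(x* − x)⟩ + 2⟨−H†v, x* − x⟩ < 0, where ⟨u, w⟩ = Re(u†w). -/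
/-!
Put `ξ = x* - x`. A nonzero entry of `ξ` is a difference of two distinct `M`-th roots of unity,
so its modulus is at least `2 sin (π / M)`; hence `‖ξ‖₂² ≥ 2 sin (π / M) ‖ξ‖₁`. The quadratic term
is at least `λ_min ‖ξ‖₂²`, the linear term at most `‖H†v‖_∞ ‖ξ‖₁`, and since `√2 ≤ 2` the gap
hypothesis lets the quadratic term win.
-/

open Matrix

namespace Real

lemma sin_le_sin_of_le_of_le_pi_sub {c u : ℝ} (hc : 0 ≤ c) (hcu : c ≤ u)
    (hu : u ≤ π - c) : sin c ≤ sin u := by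
  rcases le_total u (π / 2) with h | h
  · exact sin_le_sin_of_le_of_le_pi_div_two (by linarith) h hcu
  · rw [← sin_pi_sub u]
    exact sin_le_sin_of_le_of_le_pi_div_two (by linarith) (by linarith) (by linarith)

lemma sin_pi_div_natCast_nonneg (M : ℕ) : 0 ≤ sin (π / M) := by
  rcases M.eq_zero_or_pos with rfl | hM
  · simp
  · exact sin_nonneg_of_nonneg_of_le_pi (by positivity)
      (div_le_self pi_pos.le (by exact_mod_cast hM))

lemma sin_pi_div_le_sin_natCast_mul_pi_div {M d : ℕ} (hd : 0 < d) (hdM : d < M) :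
    sin (π / M) ≤ sin (d * π / M) := by
  have hM : (0 : ℝ) < M := by exact_mod_cast hd.trans hdM
  have hd1 : (1 : ℝ) ≤ d := by exact_mod_cast hd
  have hdM1 : (d : ℝ) + 1 ≤ M := by exact_mod_cast hdM
  apply sin_le_sin_of_le_of_le_pi_sub (by positivity)
  · gcongr; exact le_mul_of_one_le_left pi_pos.le hd1
  · rw [le_sub_iff_add_le, ← add_div, div_le_iff₀ hM]; nlinarith [pi_pos]

lemma sin_pi_div_le_abs_sin_intCast_mul_pi_div {M : ℕ} {k : ℤ} (hk : k ≠ 0)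
    (hkM : |k| < M) : sin (π / M) ≤ |sin (k * π / M)| := by
  have hd : ∀ d : ℕ, 0 < d → d < M → sin (π / M) ≤ |sin (d * π / M)| := fun d hd hdM =>
    (sin_pi_div_le_sin_natCast_mul_pi_div hd hdM).trans (le_abs_self _)
  obtain ⟨d, rfl | rfl⟩ := Int.eq_nat_or_neg k
  · simp only [ne_eq, Nat.cast_eq_zero, Nat.abs_cast, Nat.cast_lt, Int.cast_natCast] at hk hkM ⊢
    exact hd d (Nat.pos_of_ne_zero hk) hkM
  · simp only [neg_eq_zero, ne_eq, Nat.cast_eq_zero, abs_neg, Nat.abs_cast, Nat.cast_lt,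
      Int.cast_neg, Int.cast_natCast, neg_mul, neg_div, sin_neg] at hk hkM ⊢
    exact hd d (Nat.pos_of_ne_zero hk) hkM

end Real

open Complex in
lemma Complex.norm_exp_ofReal_mul_I_sub_exp_ofReal_mul_I (a b : ℝ) :
    ‖exp (a * I) - exp (b * I)‖ = 2 * |Real.sin ((a - b) / 2)| := by
  have : exp (a * I) - exp (b * I) = exp (b * I) * (exp (I * ↑(a - b)) - 1) := by
    rw [mul_sub, ← exp_add]; push_cast; ring_nf
  rw [this, norm_mul, norm_exp_ofReal_mul_I, one_mul, norm_exp_I_mul_ofReal_sub_one, norm_mul,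
    Real.norm_eq_abs, Real.norm_eq_abs, abs_two]

open Real Complex in
lemma two_mul_sin_pi_div_le_norm_exp_mul_I_sub {M : ℕ} {a b : ℝ}
    (ha : ∃ k < M, a = 2 * k * π / M) (hb : ∃ k < M, b = 2 * k * π / M)
    (hab : exp (a * I) ≠ exp (b * I)) :
    2 * Real.sin (π / M) ≤ ‖exp (a * I) - exp (b * I)‖ := by
  obtain ⟨ka, hka, rfl⟩ := ha
  obtain ⟨kb, hkb, rfl⟩ := hb
  have hk : (ka : ℤ) - kb ≠ 0 := by
    rintro hk
    obtain rfl : ka = kb := by omega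
    exact hab rfl
  have hkM : |(ka : ℤ) - kb| < M := by rw [abs_sub_lt_iff]; omega
  have hhalf : (2 * ka * π / M - 2 * kb * π / M) / 2 = (((ka : ℤ) - kb : ℤ) : ℝ) * π / M := by
    push_cast; ring
  rw [norm_exp_ofReal_mul_I_sub_exp_ofReal_mul_I, hhalf]
  linarith [Real.sin_pi_div_le_abs_sin_intCast_mul_pi_div hk hkM]

lemma mul_sum_norm_le_sum_norm_sq {ι E : Type*} [Fintype ι] [SeminormedAddGroup E]
    {x : ι → E} {c : ℝ} (h : ∀ i, x i ≠ 0 → c ≤ ‖x i‖) :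
    c * ∑ i, ‖x i‖ ≤ ∑ i, ‖x i‖ ^ 2 := by
  rw [Finset.mul_sum]
  refine Finset.sum_le_sum fun i _ => ?_
  rcases eq_or_ne (x i) 0 with hi | hi
  · simp [hi]
  · rw [sq]; exact mul_le_mul_of_nonneg_right (h i hi) (norm_nonneg _)

namespace Matrix

lemma re_star_dotProduct_self {ι 𝕜 : Type*} [Fintype ι] [RCLike 𝕜] (x : ι → 𝕜) :
    RCLike.re (star x ⬝ᵥ x) = ∑ i, ‖x i‖ ^ 2 := by
  simp only [dotProduct, Pi.star_apply, RCLike.star_def, RCLike.conj_mul, map_sum]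
  norm_cast

lemma re_star_dotProduct_le_iSup_norm_mul_sum_norm {ι 𝕜 : Type*} [Fintype ι] [RCLike 𝕜]
    (b x : ι → 𝕜) : RCLike.re (star b ⬝ᵥ x) ≤ (⨆ i, ‖b i‖) * ∑ i, ‖x i‖ := by
  rw [dotProduct, map_sum, Finset.mul_sum]
  refine Finset.sum_le_sum fun i _ => ?_
  calc RCLike.re (star b i * x i) ≤ ‖b i‖ * ‖x i‖ := by
        simpa using RCLike.re_le_norm (star b i * x i)
    _ ≤ (⨆ j, ‖b j‖) * ‖x i‖ := by
        gcongr; exact le_ciSup (f := fun j => ‖b j‖) (Finite.bddAbove_range _) i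

open scoped MatrixOrder in
lemma IsHermitian.iInf_eigenvalues_mul_re_dotProduct_le {ι 𝕜 : Type*} [Fintype ι]
    [DecidableEq ι] [RCLike 𝕜] {A : Matrix ι ι 𝕜} (hA : A.IsHermitian) (x : ι → 𝕜) :
    (⨅ i, hA.eigenvalues i) * RCLike.re (star x ⬝ᵥ x) ≤ RCLike.re (star x ⬝ᵥ A *ᵥ x) := by
  have hle : algebraMap ℝ (Matrix ι ι 𝕜) (⨅ i, hA.eigenvalues i) ≤ A := by
    refine (algebraMap_le_iff_le_spectrum hA.isSelfAdjoint).2 fun c hc => ?_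
    rw [hA.spectrum_real_eq_range_eigenvalues] at hc
    obtain ⟨i, rfl⟩ := hc
    exact ciInf_le (Finite.bddBelow_range _) i
  simpa [sub_mulVec, Algebra.algebraMap_eq_smul_one, smul_mulVec, dotProduct_smul,
    RCLike.smul_re] using (Matrix.le_iff.mp hle).re_dotProduct_nonneg x

end Matrix

theorem stmt_18_general {m n M : ℕ}
    (H : Matrix (Fin m) (Fin n) ℂ) (v : Fin m → ℂ)
    (Qb : Matrix (Fin n) (Fin n) ℂ)
    (hQbHerm : Qb.IsHermitian)
    (θ θs : Fin n → ℝ)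
    (hθ : ∀ j, ∃ k < M, θ j = 2 * k * Real.pi / M)
    (hθs : ∀ j, ∃ k < M, θs j = 2 * k * Real.pi / M)
    (x xs : Fin n → ℂ)
    (hx : ∀ j, x j = Complex.exp (θ j * Complex.I))
    (hxs : ∀ j, xs j = Complex.exp (θs j * Complex.I))
    (hne : xs ≠ x)
    (hgap : (⨆ k, ‖Hᴴ.mulVec v k‖) <
      Real.sqrt 2 * (⨅ i, hQbHerm.eigenvalues i) * Real.sin (Real.pi / M)) :
    -2 * (star (xs - x) ⬝ᵥ Qb.mulVec (xs - x)).re +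
      2 * (star (-(Hᴴ.mulVec v)) ⬝ᵥ (xs - x)).re < 0 := by
  set ξ := xs - x
  set s := Real.sin (Real.pi / M)
  set lam := ⨅ i, hQbHerm.eigenvalues i
  have hentry (j : Fin n) (hj : ξ j ≠ 0) : 2 * s ≤ ‖ξ j‖ := by
    simp only [ξ, Pi.sub_apply, hx, hxs, ne_eq, sub_eq_zero] at hj ⊢
    exact two_mul_sin_pi_div_le_norm_exp_mul_I_sub (hθs j) (hθ j) hj
  obtain ⟨j₀, hj₀⟩ : ∃ j, ξ j ≠ 0 := Function.ne_iff.mp (sub_ne_zero.mpr hne)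
  have hξ₁ : 0 < ∑ j, ‖ξ j‖ :=
    Finset.sum_pos' (fun j _ => norm_nonneg _) ⟨j₀, Finset.mem_univ _, norm_pos_iff.mpr hj₀⟩
  have hB : 0 ≤ ⨆ k, ‖Hᴴ.mulVec v k‖ := Real.iSup_nonneg fun _ => norm_nonneg _
  have hs : 0 ≤ s := Real.sin_pi_div_natCast_nonneg M
  have hlam : 0 ≤ lam :=
    (pos_of_mul_pos_right (pos_of_mul_pos_left (hB.trans_lt hgap) hs) (Real.sqrt_nonneg 2)).le
  have hquad := hQbHerm.iInf_eigenvalues_mul_re_dotProduct_le ξ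
  rw [re_star_dotProduct_self] at hquad
  have hlin := re_star_dotProduct_le_iSup_norm_mul_sum_norm (-(Hᴴ.mulVec v)) ξ
  simp only [Pi.neg_apply, norm_neg] at hlin
  have hsqrt : Real.sqrt 2 ≤ 2 := Real.sqrt_le_iff.mpr ⟨by norm_num, by norm_num⟩
  have key : (star (-(Hᴴ.mulVec v)) ⬝ᵥ ξ).re < (star ξ ⬝ᵥ Qb.mulVec ξ).re :=
    calc (star (-(Hᴴ.mulVec v)) ⬝ᵥ ξ).re ≤ (⨆ k, ‖Hᴴ.mulVec v k‖) * ∑ j, ‖ξ j‖ := hlin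
      _ < Real.sqrt 2 * lam * s * ∑ j, ‖ξ j‖ := mul_lt_mul_of_pos_right hgap hξ₁
      _ ≤ lam * (2 * s * ∑ j, ‖ξ j‖) := by
        have := mul_nonneg (mul_nonneg (mul_nonneg (sub_nonneg.mpr hsqrt) hlam) hs) hξ₁.le
        linarith
      _ ≤ lam * ∑ j, ‖ξ j‖ ^ 2 :=
        mul_le_mul_of_nonneg_left (mul_sum_norm_le_sum_norm_sq hentry) hlam
      _ ≤ (star ξ ⬝ᵥ Qb.mulVec ξ).re := hquad
  linarith

/-- Under the condition `√2 λ_min(Q̄) sin(π/M) > ‖H†v‖_∞`, for any two distinct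
M-PSK vectors `x*` and `x`, `−2⟨x*−x, Q̄(x*−x)⟩ + 2⟨−H†v, x*−x⟩ < 0`, where
`Q̄ = H†H − (1/2) Diag(diag(H†H))` and `⟨u, w⟩ = Re(u†w)`. -/
theorem stmt_18 {m n M : ℕ} (hM : 2 ≤ M)
    (H : Matrix (Fin m) (Fin n) ℂ) (v : Fin m → ℂ)
    (Qb : Matrix (Fin n) (Fin n) ℂ)
    (hQb : Qb = Hᴴ * H - (1 / 2 : ℂ) • Matrix.diagonal (fun j => (Hᴴ * H) j j))
    (hQbHerm : Qb.IsHermitian)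
    (θ θs : Fin n → ℝ)
    (hθ : ∀ j, ∃ k < M, θ j = 2 * k * Real.pi / M)
    (hθs : ∀ j, ∃ k < M, θs j = 2 * k * Real.pi / M)
    (x xs : Fin n → ℂ)
    (hx : ∀ j, x j = Complex.exp (θ j * Complex.I))
    (hxs : ∀ j, xs j = Complex.exp (θs j * Complex.I))
    (hne : xs ≠ x)
    (hgap : (⨆ k, ‖Hᴴ.mulVec v k‖) <
      Real.sqrt 2 * (⨅ i, hQbHerm.eigenvalues i) * Real.sin (Real.pi / M)) :
    -2 * (star (xs - x) ⬝ᵥ Qb.mulVec (xs - x)).re +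
      2 * (star (-(Hᴴ.mulVec v)) ⬝ᵥ (xs - x)).re < 0 :=
  stmt_18_general H v Qb hQbHerm θ θs hθ hθs x xs hx hxs hne hgap
end
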